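/- arXiv:1807.01212 — 4 statements merged into one kernel-verified Lean document; each statement's English description precedes it below -/
import Mathlib

section
/- Let (Ω, F, P) be a probability space, (S, δ) a separable metric space, U : S × Ω → ℝ a continuous random field, Y : Ω → S a random variable independent of U with ∫_S E[|U(s)|] (Y(P))(ds) < ∞. Then ω ↦ U(Y(ω), ω) is measurable and integrable, and E[U(Y)] = ∫_S 1_{E[|U(s)|]<∞}(s) · E[U(s)] (Y(P))(ds). -/
/-
Freezing lemma. Read `U (Y ω) ω` as `F (Y ω, Z ω)` with `F = uncurry U` and `Z = id`, where the
target copy of `Ω` carries the σ-algebra generated by the field. Continuity in `s` and separability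
of `S` make `F` jointly measurable for that σ-algebra, so independence turns the law of `(Y, Z)`
into a product measure and Fubini–Tonelli on it gives integrability and the iterated integral.
The finiteness hypothesis also makes almost every `U s` integrable, so the indicator only changes
the integrand on a null set.
-/

open MeasureTheory ProbabilityTheory
open scoped NNReal ENNReal

/-- The σ-algebra on `Ω` generated by a family of functions `f i : Ω → β`. -/
def sigmaGen {Ω ι β : Type*} [MeasurableSpace β] (f : ι → Ω → β) : MeasurableSpace Ω :=
  ⨆ i, MeasurableSpace.comap (f i) inferInstance

section sigmaGen

variable {Ω ι β : Type*} [MeasurableSpace β] {f : ι → Ω → β}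

theorem measurable_sigmaGen (i : ι) : Measurable[sigmaGen f] (f i) :=
  (comap_measurable (f i)).mono (le_iSup (fun j => MeasurableSpace.comap (f j) inferInstance) i)
    le_rfl

theorem sigmaGen_le {mΩ : MeasurableSpace Ω} (hf : ∀ i, Measurable (f i)) : sigmaGen f ≤ mΩ :=
  iSup_le fun i => (hf i).comap_le

end sigmaGen

theorem ae_integrable_of_lintegral_lintegral_enorm_lt_top {α β E : Type*} [MeasurableSpace α]
    [MeasurableSpace β] [NormedAddCommGroup E] {μ : Measure α} {ν : Measure β} [SFinite ν]
    {F : α × β → E} (hF : StronglyMeasurable F) (hfin : ∫⁻ x, ∫⁻ y, ‖F (x, y)‖ₑ ∂ν ∂μ < ∞) :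
    ∀ᵐ x ∂μ, Integrable (fun y => F (x, y)) ν := by
  filter_upwards [ae_lt_top hF.enorm.lintegral_prod_right' hfin.ne] with x hx
  exact ⟨(hF.comp_measurable measurable_prodMk_left).aestronglyMeasurable, hx⟩

namespace ProbabilityTheory.IndepFun

variable {Ω α β E : Type*} {mΩ : MeasurableSpace Ω} {mα : MeasurableSpace α}
  {mβ : MeasurableSpace β} [NormedAddCommGroup E] {P : Measure Ω} [IsFiniteMeasure P]
  {X : Ω → α} {Z : Ω → β}

theorem lintegral_comp_prodMk (hXZ : IndepFun X Z P) (hX : Measurable X) (hZ : Measurable Z)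
    {g : α × β → ℝ≥0∞} (hg : Measurable g) :
    ∫⁻ ω, g (X ω, Z ω) ∂P = ∫⁻ x, ∫⁻ ω, g (x, Z ω) ∂P ∂(P.map X) := by
  rw [← lintegral_map hg (hX.prodMk hZ),
    hXZ.map_prod_eq_prod_map_map hX.aemeasurable hZ.aemeasurable, lintegral_prod _ hg.aemeasurable]
  exact lintegral_congr fun x => lintegral_map (hg.comp measurable_prodMk_left) hZ

theorem integrable_comp_prodMk (hXZ : IndepFun X Z P) (hX : Measurable X) (hZ : Measurable Z)
    {F : α × β → E} (hF : StronglyMeasurable F)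
    (hfin : ∫⁻ x, ∫⁻ ω, ‖F (x, Z ω)‖ₑ ∂P ∂(P.map X) < ∞) :
    Integrable (fun ω => F (X ω, Z ω)) P :=
  ⟨(hF.comp_measurable (hX.prodMk hZ)).aestronglyMeasurable, by
    rwa [HasFiniteIntegral, hXZ.lintegral_comp_prodMk hX hZ hF.enorm]⟩

theorem integral_comp_prodMk [NormedSpace ℝ E] (hXZ : IndepFun X Z P) (hX : Measurable X)
    (hZ : Measurable Z) {F : α × β → E} (hF : StronglyMeasurable F)
    (hfin : ∫⁻ x, ∫⁻ ω, ‖F (x, Z ω)‖ₑ ∂P ∂(P.map X) < ∞) :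
    ∫ ω, F (X ω, Z ω) ∂P = ∫ x, ∫ ω, F (x, Z ω) ∂P ∂(P.map X) := by
  have hlaw := hXZ.map_prod_eq_prod_map_map hX.aemeasurable hZ.aemeasurable
  have hFint : Integrable F ((P.map X).prod (P.map Z)) := by
    rw [← hlaw, integrable_map_measure hF.aestronglyMeasurable (hX.prodMk hZ).aemeasurable]
    exact hXZ.integrable_comp_prodMk hX hZ hF hfin
  rw [← integral_map (hX.prodMk hZ).aemeasurable hF.aestronglyMeasurable, hlaw,
    integral_prod F hFint]
  exact integral_congr_ae <| .of_forall fun x =>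
    integral_map hZ.aemeasurable (hF.comp_measurable measurable_prodMk_left).aestronglyMeasurable

end ProbabilityTheory.IndepFun

/-- If `U : S × Ω → ℝ` is a continuous random field on a separable metric space `S`,
`Y : Ω → S` is a random variable independent of `U`, and `∫_S E[|U(s)|] d(Y(P))(s) < ∞`,
then `ω ↦ U (Y ω) ω` is measurable and integrable, and
`E[U(Y)] = ∫_S 1_{E[|U(s)|] < ∞}(s) E[U(s)] d(Y(P))(s)`. -/
theorem cont_random_field_eval_integrable
    {Ω S : Type*} [mΩ : MeasurableSpace Ω] [MetricSpace S]
    [TopologicalSpace.SeparableSpace S] [MeasurableSpace S] [BorelSpace S]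
    (P : Measure Ω) [IsProbabilityMeasure P]
    (U : S → Ω → ℝ)
    (hUcont : ∀ ω, Continuous (fun s => U s ω))
    (hUmeas : ∀ s, Measurable (U s))
    (Y : Ω → S) (hY : Measurable Y)
    (hind : Indep (sigmaGen U) (MeasurableSpace.comap Y inferInstance) P)
    (hint : ∫⁻ s, (∫⁻ ω, ENNReal.ofReal |U s ω| ∂P) ∂(P.map Y) < ⊤) :
    Measurable (fun ω => U (Y ω) ω) ∧ Integrable (fun ω => U (Y ω) ω) P ∧
      ∫ ω, U (Y ω) ω ∂P
        = ∫ s, Set.indicator {s' : S | Integrable (U s') P} (fun s' => ∫ ω, U s' ω ∂P) s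
            ∂(P.map Y) := by
  have hF : Measurable (Function.uncurry U) :=
    measurable_uncurry_of_continuous_of_measurable hUcont hUmeas
  have hFgen : StronglyMeasurable[(inferInstance : MeasurableSpace S).prod (sigmaGen U)]
      (Function.uncurry U) :=
    (measurable_uncurry_of_continuous_of_measurable hUcont measurable_sigmaGen).stronglyMeasurable
  have hZ : Measurable[mΩ, sigmaGen U] id := measurable_id'' (sigmaGen_le hUmeas)
  have hYZ : @IndepFun Ω S Ω mΩ _ (sigmaGen U) Y id P := by
    change Indep _ (MeasurableSpace.comap id (sigmaGen U)) P
    rw [MeasurableSpace.comap_id]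
    exact hind.symm
  simp only [← Real.enorm_eq_ofReal_abs] at hint
  refine ⟨hF.comp (hY.prodMk measurable_id),
    hYZ.integrable_comp_prodMk (mβ := sigmaGen U) hY hZ hFgen hint,
    (hYZ.integral_comp_prodMk (mβ := sigmaGen U) hY hZ hFgen hint).trans
      (integral_congr_ae ?_)⟩
  filter_upwards [ae_integrable_of_lintegral_lintegral_enorm_lt_top hF.stronglyMeasurable hint]
    with s hs
  exact (Set.indicator_of_mem (s := {s' | Integrable (U s') P}) hs
    fun s' => ∫ ω, U s' ω ∂P).symm
end

section
/- Let (Ω, F, P) be a probability space, (S, δ) a separable metric space, (E, ℰ) a measurable space, U₁, U₂ : S × Ω → ℝ continuous random fields, Y₁, Y₂ : E × Ω → S random fields such that for i ∈ {1,2}, Uᵢ and Yᵢ are independent, U₁ and U₂ are identically distributed, and Y₁ and Y₂ are identically distributed. Then the random fields (e,ω) ↦ U₁(Y₁(e,ω), ω) and (e,ω) ↦ U₂(Y₂(e,ω), ω) are identically distributed. -/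
/-!
Fix finitely many indices `a j`. Replacing each `Yᵢ(a j)` by its nearest point among the first
`N + 1` terms of a dense sequence `e` of `S` turns the composite into a fixed measurable function of
the finite family `((Uᵢ(e k))_{k ≤ N}, (Yᵢ(a j))_j)`, whose law is by independence the product of
two marginal laws that do not depend on `i`. Continuity of `Uᵢ` in the space variable makes these
approximations converge pointwise as `N → ∞`, and limits in distribution are unique.
-/

open MeasureTheory ProbabilityTheory
open scoped NNReal ENNReal

/-- Two random fields indexed by `ι` with values in `β` are identically distributed if all
their finite-dimensional distributions agree. -/
def IdentDistribField {Ω ι β : Type*} [MeasurableSpace Ω] [MeasurableSpace β]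
    (P : Measure Ω) (X₁ X₂ : ι → Ω → β) : Prop :=
  ∀ (n : ℕ) (a : Fin n → ι),
    P.map (fun ω => fun i => X₁ (a i) ω) = P.map (fun ω => fun i => X₂ (a i) ω)

open Filter Topology TopologicalSpace

section SigmaGen

variable {Ω ι ι' κ κ' β γ : Type*} [MeasurableSpace β] [MeasurableSpace γ]

lemma measurable_sigmaGen_pi (f : ι → Ω → β) (a : κ → ι) :
    Measurable[sigmaGen f] fun ω k => f (a k) ω :=
  @measurable_pi_lambda Ω _ _ (sigmaGen f) _ _ fun k =>
    Measurable.of_comap_le (le_iSup (fun i => MeasurableSpace.comap (f i) inferInstance) (a k))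

lemma ProbabilityTheory.Indep.indepFun_sigmaGen_pi [MeasurableSpace Ω] {P : Measure Ω}
    {f : ι → Ω → β} {g : ι' → Ω → γ} (h : Indep (sigmaGen f) (sigmaGen g) P)
    (a : κ → ι) (b : κ' → ι') :
    IndepFun (fun ω k => f (a k) ω) (fun ω k => g (b k) ω) P :=
  indep_of_indep_of_le_right (indep_of_indep_of_le_left h (measurable_sigmaGen_pi f a).comap_le)
    (measurable_sigmaGen_pi g b).comap_le

end SigmaGen

section JointLaw

variable {Ω ι ι' β γ : Type*} [MeasurableSpace Ω] [MeasurableSpace β] [MeasurableSpace γ]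
  {P : Measure Ω} [IsFiniteMeasure P]

lemma measurable_pi_prodMk_pi {f : ι → Ω → β} {g : ι' → Ω → γ}
    (hf : ∀ i, Measurable (f i)) (hg : ∀ i, Measurable (g i)) {m n : ℕ}
    (a : Fin m → ι) (b : Fin n → ι') :
    Measurable fun ω => (fun k => f (a k) ω, fun k => g (b k) ω) :=
  (measurable_pi_lambda _ fun _ => hf _).prodMk (measurable_pi_lambda _ fun _ => hg _)

lemma IdentDistribField.map_pi_prod_pi_eq {f₁ f₂ : ι → Ω → β} {g₁ g₂ : ι' → Ω → γ}
    (hf₁ : ∀ i, Measurable (f₁ i)) (hf₂ : ∀ i, Measurable (f₂ i))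
    (hg₁ : ∀ i, Measurable (g₁ i)) (hg₂ : ∀ i, Measurable (g₂ i))
    (hind₁ : Indep (sigmaGen f₁) (sigmaGen g₁) P) (hind₂ : Indep (sigmaGen f₂) (sigmaGen g₂) P)
    (hf : IdentDistribField P f₁ f₂) (hg : IdentDistribField P g₁ g₂)
    {m n : ℕ} (a : Fin m → ι) (b : Fin n → ι') :
    P.map (fun ω => (fun k => f₁ (a k) ω, fun k => g₁ (b k) ω)) =
      P.map (fun ω => (fun k => f₂ (a k) ω, fun k => g₂ (b k) ω)) := by
  rw [(indepFun_iff_map_prod_eq_prod_map_map (measurable_pi_lambda _ fun _ => hf₁ _).aemeasurable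
      (measurable_pi_lambda _ fun _ => hg₁ _).aemeasurable).mp (hind₁.indepFun_sigmaGen_pi a b),
    (indepFun_iff_map_prod_eq_prod_map_map (measurable_pi_lambda _ fun _ => hf₂ _).aemeasurable
      (measurable_pi_lambda _ fun _ => hg₂ _).aemeasurable).mp (hind₂.indepFun_sigmaGen_pi a b),
    hf m a, hg n b]

end JointLaw

section NearestPoint

variable {S β : Type*} [PseudoEMetricSpace S] [MeasurableSpace S] [OpensMeasurableSpace S]

-- `nearestPtInd e N s ≤ N`, so the reduction modulo `N + 1` does not change the index.
noncomputable def nearestPtFin (e : ℕ → S) (N : ℕ) (s : S) : Fin (N + 1) :=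
  Fin.ofNat (N + 1) (SimpleFunc.nearestPtInd e N s)

lemma measurable_nearestPtFin (e : ℕ → S) (N : ℕ) : Measurable (nearestPtFin e N) :=
  measurable_from_nat.comp (SimpleFunc.nearestPtInd e N).measurable

lemma apply_nearestPtFin (e : ℕ → S) (N : ℕ) (s : S) :
    e (nearestPtFin e N s) = SimpleFunc.nearestPt e N s := by
  simp [nearestPtFin, SimpleFunc.nearestPt,
    Nat.mod_eq_of_lt (Nat.lt_succ_of_le (SimpleFunc.nearestPtInd_le e N s))]

-- With `p.1 k = u (e k)`, this evaluates `u` at the nearest-point approximations of `p.2 i`.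
noncomputable def selectNearest {n : ℕ} (e : ℕ → S) (N : ℕ)
    (p : (Fin (N + 1) → β) × (Fin n → S)) : Fin n → β :=
  fun i => p.1 (nearestPtFin e N (p.2 i))

lemma measurable_selectNearest [MeasurableSpace β] {n : ℕ} (e : ℕ → S) (N : ℕ) :
    Measurable (selectNearest (β := β) (n := n) e N) := by
  refine measurable_pi_lambda _ fun i => ?_
  have heval : Measurable fun q : (Fin (N + 1) → β) × Fin (N + 1) => q.1 q.2 :=
    measurable_from_prod_countable_left fun k => measurable_pi_apply k
  exact heval.comp (measurable_fst.prodMk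
    ((measurable_nearestPtFin e N).comp ((measurable_pi_apply i).comp measurable_snd)))

lemma tendsto_selectNearest [TopologicalSpace β] {e : ℕ → S} (he : DenseRange e) {u : S → β}
    (hu : Continuous u) {n : ℕ} (y : Fin n → S) :
    Tendsto (fun N => selectNearest e N (fun k => u (e k), y)) atTop (𝓝 fun i => u (y i)) :=
  tendsto_pi_nhds.mpr fun i => by
    simpa only [selectNearest, apply_nearestPtFin, Function.comp_def] using
      (hu.tendsto _).comp (SimpleFunc.tendsto_nearestPt (he (y i)))

end NearestPoint

lemma map_eq_of_tendsto_of_map_eq {Ω E : Type*} [MeasurableSpace Ω] {P : Measure Ω}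
    [IsProbabilityMeasure P] [TopologicalSpace E] [PseudoMetrizableSpace E] [MeasurableSpace E]
    [BorelSpace E] {X₁ X₂ : ℕ → Ω → E} {Z₁ Z₂ : Ω → E}
    (hX₁ : ∀ N, Measurable (X₁ N)) (hX₂ : ∀ N, Measurable (X₂ N))
    (hX : ∀ N, P.map (X₁ N) = P.map (X₂ N))
    (h₁ : ∀ ω, Tendsto (fun N => X₁ N ω) atTop (𝓝 (Z₁ ω)))
    (h₂ : ∀ ω, Tendsto (fun N => X₂ N ω) atTop (𝓝 (Z₂ ω))) :
    P.map Z₁ = P.map Z₂ := by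
  have hZ₁ := measurable_of_tendsto_metrizable hX₁ (tendsto_pi_nhds.mpr h₁)
  have hZ₂ := measurable_of_tendsto_metrizable hX₂ (tendsto_pi_nhds.mpr h₂)
  have t₁ := (tendstoInDistribution_of_ae_tendsto (μ' := P) (fun N => (hX₁ N).aemeasurable)
    hZ₁.aemeasurable (ae_of_all _ h₁)).tendsto
  have t₂ := (tendstoInDistribution_of_ae_tendsto (μ' := P) (fun N => (hX₂ N).aemeasurable)
    hZ₂.aemeasurable (ae_of_all _ h₂)).tendsto
  have t₁' : Tendsto (fun N => (⟨P.map (X₂ N), Measure.isProbabilityMeasure_map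
      (hX₂ N).aemeasurable⟩ : ProbabilityMeasure E)) atTop _ :=
    t₁.congr fun N => Subtype.ext (hX N)
  exact congrArg Subtype.val (tendsto_nhds_unique (X := ProbabilityMeasure E) t₁' t₂)

/-- If `U₁, U₂ : S × Ω → ℝ` are continuous random fields, `Y₁, Y₂ : E × Ω → S` are random
fields, `Uᵢ` and `Yᵢ` are independent, `U₁` and `U₂` are identically distributed, and `Y₁` and
`Y₂` are identically distributed, then the random fields `(e, ω) ↦ Uᵢ(Yᵢ(e, ω), ω)`, `i = 1, 2`,
are identically distributed. -/
theorem ident_distrib_composition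
    {Ω S E : Type*} [mΩ : MeasurableSpace Ω] [MetricSpace S]
    [TopologicalSpace.SeparableSpace S] [MeasurableSpace S] [BorelSpace S]
    (P : Measure Ω) [IsProbabilityMeasure P]
    (U₁ U₂ : S → Ω → ℝ) (Y₁ Y₂ : E → Ω → S)
    (hU₁cont : ∀ ω, Continuous (fun s => U₁ s ω))
    (hU₂cont : ∀ ω, Continuous (fun s => U₂ s ω))
    (hU₁meas : ∀ s, Measurable (U₁ s)) (hU₂meas : ∀ s, Measurable (U₂ s))
    (hY₁meas : ∀ e, Measurable (Y₁ e)) (hY₂meas : ∀ e, Measurable (Y₂ e))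
    (hind₁ : Indep (sigmaGen U₁) (sigmaGen Y₁) P)
    (hind₂ : Indep (sigmaGen U₂) (sigmaGen Y₂) P)
    (hU : IdentDistribField P U₁ U₂)
    (hY : IdentDistribField P Y₁ Y₂) :
    IdentDistribField P (fun e ω => U₁ (Y₁ e ω) ω) (fun e ω => U₂ (Y₂ e ω) ω) := by
  intro n a
  obtain rfl | hn := Nat.eq_zero_or_pos n
  · exact congrArg P.map (Subsingleton.elim _ _)
  have : Nonempty S := ⟨Y₁ (a ⟨0, hn⟩) (nonempty_of_isProbabilityMeasure P).some⟩
  set e := denseSeq S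
  refine map_eq_of_tendsto_of_map_eq
    (X₁ := fun N ω => selectNearest e N (fun k => U₁ (e k) ω, fun i => Y₁ (a i) ω))
    (X₂ := fun N ω => selectNearest e N (fun k => U₂ (e k) ω, fun i => Y₂ (a i) ω))
    (fun N => (measurable_selectNearest e N).comp (measurable_pi_prodMk_pi hU₁meas hY₁meas _ a))
    (fun N => (measurable_selectNearest e N).comp (measurable_pi_prodMk_pi hU₂meas hY₂meas _ a))
    (fun N => ?_)
    (fun ω => tendsto_selectNearest (denseRange_denseSeq S) (hU₁cont ω) _)
    (fun ω => tendsto_selectNearest (denseRange_denseSeq S) (hU₂cont ω) _)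
  have h := congrArg (Measure.map (selectNearest e N)) <| hU.map_pi_prod_pi_eq
    hU₁meas hU₂meas hY₁meas hY₂meas hind₁ hind₂ hY (fun k : Fin (N + 1) => e k) a
  rwa [Measure.map_map (measurable_selectNearest e N) (measurable_pi_prodMk_pi hU₁meas hY₁meas _ a),
    Measure.map_map (measurable_selectNearest e N)
      (measurable_pi_prodMk_pi hU₂meas hY₂meas _ a)] at h
end

section
/- Let d ∈ ℕ and let (RV_{n,M})_{n,M ∈ ℤ} ⊆ ℕ₀ satisfy RV_{0,M} = 0 for all M ∈ ℕ and, for all n, M ∈ ℕ, RV_{n,M} ≤ d·Mⁿ + Σ_{l=0}^{n-1} M^{n-l} · (d + 1 + RV_{l,M} + 1_ℕ(l)·RV_{l-1,M}). Then for all n, M ∈ ℕ it holds that RV_{n,M} ≤ d·(5M)ⁿ. -/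
/-!
Strong induction on `n`. Bounding `RV l M` and `RV (l-1) M` by `d (5M)^l` and `d + 1` by
`2 d (5M)^l`, the `l`-th summand of the recursion is at most `4 d M^(n-l) (5M)^l = 4 d M^n 5^l`,
and the geometric sum `1 + 4 ∑_{l<n} 5^l = 5^n` closes the induction.
-/

open Finset

theorem pow_add_sum_pow_sub_mul_succ_mul_pow {R : Type*} [CommSemiring R] (c q M : R) (n : ℕ) :
    c * M ^ n + ∑ l ∈ range n, M ^ (n - l) * (q * c * ((q + 1) * M) ^ l) =
      c * ((q + 1) * M) ^ n := by
  have hsummand : ∀ l ∈ range n,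
      M ^ (n - l) * (q * c * ((q + 1) * M) ^ l) = c * M ^ n * ((q + 1) ^ l * q) := by
    intro l hl
    rw [mul_pow, ← Nat.sub_add_cancel (mem_range.mp hl).le, pow_add, Nat.add_sub_cancel]
    ring
  rw [sum_congr rfl hsummand, ← mul_sum, ← sum_mul, mul_pow, ← geom_sum_mul_add q n]
  ring

theorem add_one_add_add_le_four_mul {d x a b : ℕ} (hd : 1 ≤ d) (hx : 1 ≤ x)
    (ha : a ≤ d * x) (hb : b ≤ d * x) : d + 1 + a + b ≤ 4 * d * x := by
  nlinarith

/-- Computational effort bound for multilevel Picard approximations: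
if `RV 0 M = 0` and `RV n M ≤ d Mⁿ + ∑_{l<n} M^(n-l) (d + 1 + RV l M + 1_{l≥1} RV (l-1) M)`,
then `RV n M ≤ d (5M)ⁿ`. -/
theorem mlp_cost_bound (d : ℕ) (hd : 1 ≤ d) (RV : ℕ → ℕ → ℕ)
    (h0 : ∀ M, 1 ≤ M → RV 0 M = 0)
    (hrec : ∀ n M, 1 ≤ n → 1 ≤ M →
      RV n M ≤ d * M ^ n + ∑ l ∈ Finset.range n,
        M ^ (n - l) * (d + 1 + RV l M + (if 1 ≤ l then RV (l - 1) M else 0))) :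
    ∀ n M, 1 ≤ n → 1 ≤ M → RV n M ≤ d * (5 * M) ^ n := by
  rintro n M - hM
  induction n using Nat.strong_induction_on with
  | _ n ih =>
    rcases n.eq_zero_or_pos with rfl | hn
    · simp [h0 M hM]
    have hsummand : ∀ l ∈ range n,
        d + 1 + RV l M + (if 1 ≤ l then RV (l - 1) M else 0) ≤ 4 * d * (5 * M) ^ l := by
      intro l hl
      have hl := mem_range.mp hl
      refine add_one_add_add_le_four_mul hd (Nat.one_le_pow _ _ (by omega))
        (ih l hl) ?_
      split_ifs
      · exact (ih (l - 1) (by omega)).trans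
          (Nat.mul_le_mul_left d (Nat.pow_le_pow_right (by omega) (by omega)))
      · exact Nat.zero_le _
    calc RV n M
        ≤ d * M ^ n + ∑ l ∈ range n,
            M ^ (n - l) * (d + 1 + RV l M + (if 1 ≤ l then RV (l - 1) M else 0)) :=
          hrec n M hn hM
      _ ≤ d * M ^ n + ∑ l ∈ range n, M ^ (n - l) * (4 * d * (5 * M) ^ l) := by
          gcongr with l hl
          exact hsummand l hl
      _ = d * (5 * M) ^ n := by
          simpa using pow_add_sum_pow_sub_mul_succ_mul_pow d 4 M n
end

section
/- Let (Ω, F, P) be a probability space, T, p, L ∈ [0,∞), d ∈ ℕ, let u, v ∈ C([0,T]×ℝ^d, ℝ), f ∈ C([0,T]×ℝ^d×ℝ, ℝ) satisfy |f(t,x,a) − f(t,x,b)| ≤ L|a−b| for all t,x,a,b, and let W be a d-dimensional standard Brownian motion. Then for all t ∈ [0,T], x ∈ ℝ^d, λ ∈ (0,∞): e^{λt} E[ ∫ₜᵀ |f(s, x+W_{s−t}, u(s, x+W_{s−t})) − f(s, x+W_{s−t}, v(s, x+W_{s−t}))| ds ] ≤ (2^{max{p−1,0}} L (1 + ‖x‖^p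 + E[‖W_T‖^p]) / λ) · sup_{s∈[t,T]} sup_{y∈ℝ^d} ( e^{λs} |u(s,y) − v(s,y)| / (1 + ‖y‖^p) ). -/
open MeasureTheory ProbabilityTheory
open scoped NNReal ENNReal

/-- `W` is a standard `d`-dimensional Brownian motion on `[0, T]` (with continuous sample
paths): it starts at `0`, has continuous paths, measurable evaluations, independent
increments, and its increments have independent coordinates, each one centered Gaussian with
variance given by the length of the time increment. -/
def IsStandardBM {Ω : Type*} [MeasurableSpace Ω] (P : Measure Ω) {d : ℕ} (T : ℝ)
    (W : ℝ → Ω → EuclideanSpace ℝ (Fin d)) : Prop :=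
  (∀ ω, W 0 ω = 0) ∧
  (∀ ω, Continuous (fun t => W t ω)) ∧
  (∀ t, Measurable (W t)) ∧
  (∀ (n : ℕ) (t : ℕ → ℝ), Monotone t →
    iIndepFun
      (fun (i : Fin n) ω => W (t (i + 1)) ω - W (t i) ω) P) ∧
  (∀ s t : ℝ, 0 ≤ s → s ≤ t → t ≤ T →
    (iIndepFun
        (fun (i : Fin d) ω => (W t ω - W s ω) i) P ∧
      ∀ i : Fin d, P.map (fun ω => (W t ω - W s ω) i)
        = gaussianReal 0 (Real.toNNReal (t - s))))

/-- The squared semi-norm `‖V‖ₖ²`: for `k = 0` it is `E[|V(0, ξ)|²]`, and for `k ≥ 1` it is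
`(1/Tᵏ) ∫₀ᵀ t^(k-1)/(k-1)! E[|V(t, ξ + W_t)|²] dt`. -/
noncomputable def mlpSeminormSq {Ω : Type*} [MeasurableSpace Ω] (P : Measure Ω) {d : ℕ}
    (W : ℝ → Ω → EuclideanSpace ℝ (Fin d)) (ξ : EuclideanSpace ℝ (Fin d)) (T : ℝ) (k : ℕ)
    (V : ℝ → EuclideanSpace ℝ (Fin d) → Ω → ℝ) : ℝ≥0∞ :=
  match k with
  | 0 => ∫⁻ ω, ENNReal.ofReal (|V 0 ξ ω| ^ 2) ∂P
  | Nat.succ j =>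
      ENNReal.ofReal (1 / T ^ (j + 1)) *
        ∫⁻ t in Set.Icc (0 : ℝ) T,
          (ENNReal.ofReal (t ^ j / (Nat.factorial j)) *
            ∫⁻ ω, ENNReal.ofReal (|V t (ξ + W t ω) ω| ^ 2) ∂P)

/-- The semi-norm `‖V‖ₖ`. -/
noncomputable def mlpSeminorm {Ω : Type*} [MeasurableSpace Ω] (P : Measure Ω) {d : ℕ}
    (W : ℝ → Ω → EuclideanSpace ℝ (Fin d)) (ξ : EuclideanSpace ℝ (Fin d)) (T : ℝ) (k : ℕ)
    (V : ℝ → EuclideanSpace ℝ (Fin d) → Ω → ℝ) : ℝ≥0∞ :=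
  (mlpSeminormSq P W ξ T k V) ^ (1 / 2 : ℝ)

/-! Write `M` for the weighted supremum on the right. Pointwise, the Lipschitz bound gives
`|f(s, y, u) - f(s, y, v)| ≤ L e^{-λs} (1 + ‖y‖^p) M`, and for `y = x + W_{s-t}` the weight is
split by `1 + ‖x + w‖^p ≤ 2^{max(p-1,0)} (1 + ‖x‖^p + ‖w‖^p)`. After Tonelli the moment
`E‖W_{s-t}‖^p` is at most `E‖W_T‖^p` by Brownian scaling (`W_r` has the law of `√r` times a
standard Gaussian vector), and `∫ₜᵀ e^{-λs} ds ≤ e^{-λt}/λ`. -/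

open Set

theorem Real.rpow_add_le_two_rpow_max_mul_rpow_add_rpow {a b p : ℝ} (ha : 0 ≤ a) (hb : 0 ≤ b)
    (hp : 0 ≤ p) : (a + b) ^ p ≤ 2 ^ max (p - 1) 0 * (a ^ p + b ^ p) := by
  rcases le_total p 1 with hp1 | hp1
  · rw [max_eq_right (by linarith), Real.rpow_zero, one_mul]
    exact Real.rpow_add_le_add_rpow ha hb hp hp1
  · rw [max_eq_left (by linarith)]
    lift a to ℝ≥0 using ha
    lift b to ℝ≥0 using hb
    exact_mod_cast NNReal.rpow_add_le_mul_rpow_add_rpow a b hp1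

theorem one_add_norm_add_rpow_le {E : Type*} [SeminormedAddCommGroup E] {p : ℝ} (hp : 0 ≤ p)
    (x w : E) : 1 + ‖x + w‖ ^ p ≤ 2 ^ max (p - 1) 0 * (1 + ‖x‖ ^ p + ‖w‖ ^ p) := by
  have hc : (1 : ℝ) ≤ 2 ^ max (p - 1) 0 := Real.one_le_rpow one_le_two (le_max_right _ _)
  have hxw : ‖x + w‖ ^ p ≤ 2 ^ max (p - 1) 0 * (‖x‖ ^ p + ‖w‖ ^ p) :=
    (Real.rpow_le_rpow (norm_nonneg _) (norm_add_le x w) hp).trans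
      (Real.rpow_add_le_two_rpow_max_mul_rpow_add_rpow (norm_nonneg _) (norm_nonneg _) hp)
  nlinarith [Real.rpow_nonneg (norm_nonneg x) p, Real.rpow_nonneg (norm_nonneg w) p]

theorem lintegral_exp_neg_mul_Icc_le {t T lam : ℝ} (hlam : 0 < lam) :
    ∫⁻ s in Icc t T, ENNReal.ofReal (Real.exp (-lam * s))
      ≤ ENNReal.ofReal (Real.exp (-lam * t) / lam) := by
  have hint : ∫ s in Ioi t, Real.exp (-lam * s) = Real.exp (-lam * t) / lam := by
    rw [integral_exp_mul_Ioi (neg_lt_zero.2 hlam), neg_div_neg_eq]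
  calc ∫⁻ s in Icc t T, ENNReal.ofReal (Real.exp (-lam * s))
      ≤ ∫⁻ s in Ici t, ENNReal.ofReal (Real.exp (-lam * s)) :=
        lintegral_mono_set Icc_subset_Ici_self
    _ = ∫⁻ s in Ioi t, ENNReal.ofReal (Real.exp (-lam * s)) :=
        setLIntegral_congr Ioi_ae_eq_Ici.symm
    _ = ENNReal.ofReal (Real.exp (-lam * t) / lam) := by
        rw [← hint, ofReal_integral_eq_lintegral_ofReal
          (integrableOn_exp_mul_Ioi (neg_lt_zero.2 hlam) t)
          (Filter.Eventually.of_forall fun s => (Real.exp_pos _).le)]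

theorem lintegral_setLIntegral_exp_neg_mul_le {Ω : Type*} [MeasurableSpace Ω] {P : Measure Ω}
    [SFinite P] {g : ℝ → Ω → ℝ≥0∞} (hg : Measurable (Function.uncurry g)) {t T lam : ℝ}
    (hlam : 0 < lam) {C : ℝ≥0∞} (hC : ∀ s ∈ Icc t T, ∫⁻ ω, g s ω ∂P ≤ C) :
    ∫⁻ ω, (∫⁻ s in Icc t T, ENNReal.ofReal (Real.exp (-lam * s)) * g s ω) ∂P
      ≤ ENNReal.ofReal (Real.exp (-lam * t) / lam) * C := by
  have hexp : Measurable fun s : ℝ => ENNReal.ofReal (Real.exp (-lam * s)) := by fun_prop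
  rw [lintegral_lintegral_swap ((hexp.comp measurable_snd).mul
    (hg.comp measurable_swap)).aemeasurable]
  calc ∫⁻ s in Icc t T, ∫⁻ ω, ENNReal.ofReal (Real.exp (-lam * s)) * g s ω ∂P
      = ∫⁻ s in Icc t T, ENNReal.ofReal (Real.exp (-lam * s)) * ∫⁻ ω, g s ω ∂P := by
        refine setLIntegral_congr_fun measurableSet_Icc fun s _ => ?_
        exact lintegral_const_mul _ (hg.comp (measurable_const.prodMk measurable_id))
    _ ≤ ∫⁻ s in Icc t T, ENNReal.ofReal (Real.exp (-lam * s)) * C :=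
        setLIntegral_mono' measurableSet_Icc fun s hs => by gcongr; exact hC s hs
    _ ≤ ENNReal.ofReal (Real.exp (-lam * t) / lam) * C := by
        rw [lintegral_mul_const _ hexp]
        gcongr
        exact lintegral_exp_neg_mul_Icc_le hlam

namespace IsStandardBM

variable {Ω : Type*} [MeasurableSpace Ω] {P : Measure Ω} {d : ℕ} {T : ℝ}
  {W : ℝ → Ω → EuclideanSpace ℝ (Fin d)}

theorem measurable (hW : IsStandardBM P T W) (r : ℝ) : Measurable (W r) :=
  hW.2.2.1 r

theorem measurable_uncurry (hW : IsStandardBM P T W) : Measurable (Function.uncurry W) :=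
  measurable_uncurry_of_continuous_of_measurable hW.2.1 hW.2.2.1

theorem map_ofLp_eq_map_sqrt_mul (hW : IsStandardBM P T W) {r : ℝ} (hr : 0 ≤ r) (hrT : r ≤ T) :
    P.map (fun ω => WithLp.ofLp (W r ω)) =
      (Measure.pi fun _ : Fin d => gaussianReal 0 1).map (fun y i => √r * y i) := by
  obtain ⟨hindep, hgauss⟩ := hW.2.2.2.2 0 r le_rfl hr hrT
  simp only [hW.1, sub_zero] at hindep hgauss
  have hgauss_sqrt : gaussianReal 0 r.toNNReal = (gaussianReal 0 1).map (√r * ·) := by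
    rw [gaussianReal_map_const_mul, mul_zero, mul_one]
    congr
    ext
    simp [Real.sq_sqrt hr, hr]
  rw [Measure.pi_map_pi fun _ => (measurable_const_mul _).aemeasurable]
  refine (hindep.map_fun_eq_pi_map fun i => ?_).trans ?_
  · exact ((measurable_pi_apply i).comp
      ((WithLp.measurable_ofLp _ _).comp (hW.measurable r))).aemeasurable
  · simp only [hgauss, hgauss_sqrt]

theorem lintegral_norm_rpow_eq (hW : IsStandardBM P T W) {p r : ℝ} (hr : 0 ≤ r)
    (hrT : r ≤ T) :
    ∫⁻ ω, ENNReal.ofReal (‖W r ω‖ ^ p) ∂P = ENNReal.ofReal (√r ^ p) *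
      ∫⁻ y, ENNReal.ofReal (‖WithLp.toLp 2 y‖ ^ p)
        ∂(Measure.pi fun _ : Fin d => gaussianReal 0 1) := by
  have hnorm : Measurable fun y : Fin d → ℝ => ENNReal.ofReal (‖WithLp.toLp 2 y‖ ^ p) := by
    fun_prop
  calc ∫⁻ ω, ENNReal.ofReal (‖W r ω‖ ^ p) ∂P
      = ∫⁻ y, ENNReal.ofReal (‖WithLp.toLp 2 y‖ ^ p) ∂(P.map fun ω => WithLp.ofLp (W r ω)) :=
        (lintegral_map hnorm ((WithLp.measurable_ofLp _ _).comp (hW.measurable r))).symm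
    _ = ∫⁻ y, ENNReal.ofReal (‖WithLp.toLp 2 (√r • y)‖ ^ p)
          ∂(Measure.pi fun _ : Fin d => gaussianReal 0 1) := by
        rw [hW.map_ofLp_eq_map_sqrt_mul hr hrT, lintegral_map hnorm (by fun_prop)]
        rfl
    _ = _ := by
        simp_rw [WithLp.toLp_smul, norm_smul, Real.norm_of_nonneg (Real.sqrt_nonneg r),
          Real.mul_rpow (Real.sqrt_nonneg r) (norm_nonneg _),
          ENNReal.ofReal_mul (Real.rpow_nonneg (Real.sqrt_nonneg r) _)]
        exact lintegral_const_mul _ hnorm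

theorem lintegral_norm_rpow_le (hW : IsStandardBM P T W) {p r : ℝ} (hp : 0 ≤ p) (hr : 0 ≤ r)
    (hrT : r ≤ T) :
    ∫⁻ ω, ENNReal.ofReal (‖W r ω‖ ^ p) ∂P ≤ ∫⁻ ω, ENNReal.ofReal (‖W T ω‖ ^ p) ∂P := by
  rw [hW.lintegral_norm_rpow_eq hr hrT, hW.lintegral_norm_rpow_eq (hr.trans hrT) le_rfl]
  gcongr

theorem lintegral_const_add_norm_rpow_le [IsProbabilityMeasure P] (hW : IsStandardBM P T W)
    {p r : ℝ} (hp : 0 ≤ p) (hr : 0 ≤ r) (hrT : r ≤ T) (a : ℝ≥0∞) :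
    ∫⁻ ω, (a + ENNReal.ofReal (‖W r ω‖ ^ p)) ∂P
      ≤ a + ∫⁻ ω, ENNReal.ofReal (‖W T ω‖ ^ p) ∂P := by
  rw [lintegral_add_left measurable_const, lintegral_const, measure_univ, mul_one]
  gcongr a + ?_
  exact hW.lintegral_norm_rpow_le hp hr hrT

end IsStandardBM

section WeightedSup

variable {E : Type*} [SeminormedAddCommGroup E]

noncomputable def weightedSupDist (p lam t T : ℝ) (u v : ℝ → E → ℝ) : ℝ≥0∞ :=
  ⨆ s ∈ Icc t T, ⨆ y : E, ENNReal.ofReal (Real.exp (lam * s) * |u s y - v s y| / (1 + ‖y‖ ^ p))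

theorem ofReal_abs_sub_le_weightedSupDist {p lam t T s : ℝ} {u v : ℝ → E → ℝ}
    (hs : s ∈ Icc t T) (y : E) :
    ENNReal.ofReal |u s y - v s y|
      ≤ ENNReal.ofReal (Real.exp (-lam * s) * (1 + ‖y‖ ^ p)) * weightedSupDist p lam t T u v := by
  have hw : 0 < 1 + ‖y‖ ^ p := by positivity
  have hsplit : |u s y - v s y| = Real.exp (-lam * s) * (1 + ‖y‖ ^ p) *
      (Real.exp (lam * s) * |u s y - v s y| / (1 + ‖y‖ ^ p)) := by
    rw [neg_mul, Real.exp_neg]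
    field_simp
  rw [hsplit, ENNReal.ofReal_mul (by positivity)]
  gcongr
  exact le_iSup₂_of_le (f := fun s _ => ⨆ y : E,
    ENNReal.ofReal (Real.exp (lam * s) * |u s y - v s y| / (1 + ‖y‖ ^ p))) s hs
    (le_iSup_of_le y le_rfl)

theorem ofReal_abs_sub_comp_le_weightedSupDist {p L lam t T s : ℝ} (hp : 0 ≤ p) (hL : 0 ≤ L)
    {u v : ℝ → E → ℝ} {g : ℝ → ℝ} (hg : ∀ a b, |g a - g b| ≤ L * |a - b|) (hs : s ∈ Icc t T)
    (x w : E) :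
    ENNReal.ofReal |g (u s (x + w)) - g (v s (x + w))|
      ≤ ENNReal.ofReal (Real.exp (-lam * s)) * (ENNReal.ofReal (2 ^ max (p - 1) 0 * L) *
          (1 + ENNReal.ofReal (‖x‖ ^ p) + ENNReal.ofReal (‖w‖ ^ p)) *
            weightedSupDist p lam t T u v) := by
  calc ENNReal.ofReal |g (u s (x + w)) - g (v s (x + w))|
      ≤ ENNReal.ofReal L * ENNReal.ofReal |u s (x + w) - v s (x + w)| := by
        rw [← ENNReal.ofReal_mul hL]
        exact ENNReal.ofReal_le_ofReal (hg _ _)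
    _ ≤ ENNReal.ofReal L * (ENNReal.ofReal (Real.exp (-lam * s) * (1 + ‖x + w‖ ^ p)) *
          weightedSupDist p lam t T u v) := by
        gcongr
        exact ofReal_abs_sub_le_weightedSupDist hs _
    _ ≤ ENNReal.ofReal L * (ENNReal.ofReal (Real.exp (-lam * s) *
          (2 ^ max (p - 1) 0 * (1 + ‖x‖ ^ p + ‖w‖ ^ p))) * weightedSupDist p lam t T u v) := by
        gcongr
        exact one_add_norm_add_rpow_le hp x w
    _ = _ := by
        rw [ENNReal.ofReal_mul (Real.exp_pos _).le, ENNReal.ofReal_mul (by positivity),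
          ENNReal.ofReal_mul (by positivity), ENNReal.ofReal_add (by positivity) (by positivity),
          ENNReal.ofReal_add zero_le_one (by positivity), ENNReal.ofReal_one]
        ring

end WeightedSup

theorem a_priori_lipschitz_estimate_general
    {Ω : Type*} [mΩ : MeasurableSpace Ω] (P : Measure Ω) [IsProbabilityMeasure P]
    (T p L : ℝ) (hp : 0 ≤ p) (hL : 0 ≤ L) (d : ℕ)
    (u v : ℝ → EuclideanSpace ℝ (Fin d) → ℝ)
    (f : ℝ → EuclideanSpace ℝ (Fin d) → ℝ → ℝ)
    (hLip : ∀ t ∈ Set.Icc (0 : ℝ) T, ∀ x a b, |f t x a - f t x b| ≤ L * |a - b|)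
    (W : ℝ → Ω → EuclideanSpace ℝ (Fin d)) (hW : IsStandardBM P T W) :
    ∀ t ∈ Set.Icc (0 : ℝ) T, ∀ x, ∀ lam : ℝ, 0 < lam →
      ENNReal.ofReal (Real.exp (lam * t)) *
          ∫⁻ ω, (∫⁻ s in Set.Icc t T,
            ENNReal.ofReal |f s (x + W (s - t) ω) (u s (x + W (s - t) ω))
              - f s (x + W (s - t) ω) (v s (x + W (s - t) ω))|) ∂P
        ≤ (ENNReal.ofReal (2 ^ max (p - 1) 0 * L) *
              (1 + ENNReal.ofReal (‖x‖ ^ p) +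
                ∫⁻ ω, ENNReal.ofReal (‖W T ω‖ ^ p) ∂P) / ENNReal.ofReal lam) *
            ⨆ s ∈ Set.Icc t T, ⨆ y : EuclideanSpace ℝ (Fin d),
              ENNReal.ofReal (Real.exp (lam * s) * |u s y - v s y| / (1 + ‖y‖ ^ p)) := by
  intro t ht x lam hlam
  set C := ENNReal.ofReal (2 ^ max (p - 1) 0 * L)
  set X := ENNReal.ofReal (‖x‖ ^ p)
  set M := weightedSupDist p lam t T u v
  have hWt : Measurable fun q : ℝ × Ω => W (q.1 - t) q.2 :=
    hW.measurable_uncurry.comp ((measurable_fst.sub_const t).prodMk measurable_snd)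
  have hmoment : ∀ s ∈ Icc t T,
      ∫⁻ ω, C * (1 + X + ENNReal.ofReal (‖W (s - t) ω‖ ^ p)) * M ∂P
        ≤ C * (1 + X + ∫⁻ ω, ENNReal.ofReal (‖W T ω‖ ^ p) ∂P) * M := by
    intro s hs
    have hWs := ((hW.measurable (s - t)).norm.pow_const p).ennreal_ofReal.const_add (1 + X)
    rw [lintegral_mul_const _ (hWs.const_mul _), lintegral_const_mul _ hWs]
    gcongr C * ?_ * M
    exact hW.lintegral_const_add_norm_rpow_le hp (sub_nonneg.2 hs.1) (by linarith [ht.1, hs.2]) _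
  calc _ ≤ ENNReal.ofReal (Real.exp (lam * t)) * ∫⁻ ω, (∫⁻ s in Icc t T,
          ENNReal.ofReal (Real.exp (-lam * s)) *
            (C * (1 + X + ENNReal.ofReal (‖W (s - t) ω‖ ^ p)) * M)) ∂P := by
        gcongr _ * ?_
        refine lintegral_mono fun ω => setLIntegral_mono' measurableSet_Icc fun s hs => ?_
        exact ofReal_abs_sub_comp_le_weightedSupDist hp hL
          (hLip s ⟨ht.1.trans hs.1, hs.2⟩ _) hs x _
    _ ≤ ENNReal.ofReal (Real.exp (lam * t)) * (ENNReal.ofReal (Real.exp (-lam * t) / lam) *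
          (C * (1 + X + ∫⁻ ω, ENNReal.ofReal (‖W T ω‖ ^ p) ∂P) * M)) := by
        gcongr
        exact lintegral_setLIntegral_exp_neg_mul_le
          (((hWt.norm.pow_const p).ennreal_ofReal.const_add _).const_mul _ |>.mul_const _)
          hlam hmoment
    _ = C * (1 + X + ∫⁻ ω, ENNReal.ofReal (‖W T ω‖ ^ p) ∂P) / ENNReal.ofReal lam * M := by
        rw [← mul_assoc, ← ENNReal.ofReal_mul (Real.exp_pos _).le, neg_mul, Real.exp_neg,
          mul_div_assoc', mul_inv_cancel₀ (Real.exp_pos _).ne', ENNReal.ofReal_div_of_pos hlam,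
          ENNReal.ofReal_one, one_div, div_eq_mul_inv]
        ring

/-- A priori Lipschitz estimate: for `f` Lipschitz in the last variable,
`e^{λt} E[∫ₜᵀ |f(s,x+W_{s−t},u(…)) − f(s,x+W_{s−t},v(…))| ds]
  ≤ (2^max{p−1,0} L (1+‖x‖^p+E[‖W_T‖^p]) / λ)
      sup_{s∈[t,T]} sup_y e^{λs}|u(s,y)−v(s,y)|/(1+‖y‖^p)`. -/
theorem a_priori_lipschitz_estimate
    {Ω : Type*} [mΩ : MeasurableSpace Ω] (P : Measure Ω) [IsProbabilityMeasure P]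
    (T p L : ℝ) (hT : 0 ≤ T) (hp : 0 ≤ p) (hL : 0 ≤ L) (d : ℕ)
    (u v : ℝ → EuclideanSpace ℝ (Fin d) → ℝ)
    (f : ℝ → EuclideanSpace ℝ (Fin d) → ℝ → ℝ)
    (hu : Continuous (fun q : ℝ × EuclideanSpace ℝ (Fin d) => u q.1 q.2))
    (hv : Continuous (fun q : ℝ × EuclideanSpace ℝ (Fin d) => v q.1 q.2))
    (hf : Continuous (fun q : ℝ × EuclideanSpace ℝ (Fin d) × ℝ => f q.1 q.2.1 q.2.2))
    (hLip : ∀ t ∈ Set.Icc (0 : ℝ) T, ∀ x a b, |f t x a - f t x b| ≤ L * |a - b|)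
    (W : ℝ → Ω → EuclideanSpace ℝ (Fin d)) (hW : IsStandardBM P T W) :
    ∀ t ∈ Set.Icc (0 : ℝ) T, ∀ x, ∀ lam : ℝ, 0 < lam →
      ENNReal.ofReal (Real.exp (lam * t)) *
          ∫⁻ ω, (∫⁻ s in Set.Icc t T,
            ENNReal.ofReal |f s (x + W (s - t) ω) (u s (x + W (s - t) ω))
              - f s (x + W (s - t) ω) (v s (x + W (s - t) ω))|) ∂P
        ≤ (ENNReal.ofReal (2 ^ max (p - 1) 0 * L) *
              (1 + ENNReal.ofReal (‖x‖ ^ p) +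
                ∫⁻ ω, ENNReal.ofReal (‖W T ω‖ ^ p) ∂P) / ENNReal.ofReal lam) *
            ⨆ s ∈ Set.Icc t T, ⨆ y : EuclideanSpace ℝ (Fin d),
              ENNReal.ofReal (Real.exp (lam * s) * |u s y - v s y| / (1 + ‖y‖ ^ p)) :=
  a_priori_lipschitz_estimate_general (mΩ := mΩ) P T p L hp hL d u v f hLip W hW
end
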